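/- In the max-cut reduction game, the mixed strategy profile where each player i_v independently produces output 1 along α_v with probability 1/2 and along β_v with probability 1/2 is a mixed-strategy Nash equilibrium: given that all other players follow this strategy, every pure strategy of player i_v that selects α_v or β_v yields the same expected utility, and any strategy producing output along activities of a different vertex yields strictly lower expected utility. -/

import Mathlib

/-!
Under the uniform profile every player is alone at its own vertex and wins the whole vertex prize
`4W + 2`, where `W` is the total edge weight. A player who moves to another vertex shares that
vertex's prize with its owner, and all edge contests together pay at most `W`, so the deviation
earns at most `3W + 1 < 4W + 2` in every realisation. Flipping every side at once is a symmetry of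
the game, so fixing the side of one's own vertex leaves the expected utility unchanged.
-/

open Finset

noncomputable section MaxCutMixed

variable {V : Type*} [Fintype V] [DecidableEq V]

/-- total edge weight -/
def totalW (E : Finset (Sym2 V)) (w : Sym2 V → ℝ) : ℝ := ∑ e ∈ E, w e

/-- winners of the vertex contest of `u` -/
def vWinners (s : V → V × Bool) (u : V) : Finset V :=
  univ.filter (fun i => (s i).1 = u)

/-- winners of the edge contest of edge `e` on side `side` -/
def eWinners (s : V → V × Bool) (e : Sym2 V) (side : Bool) : Finset V :=
  univ.filter (fun i => (s i).1 ∈ e ∧ (s i).2 = side)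

/-- utility of player `i` in the max-cut reduction game -/
def mcUtil (E : Finset (Sym2 V)) (w : Sym2 V → ℝ) (s : V → V × Bool) (i : V) : ℝ :=
  (4 * totalW E w + 2) / ((vWinners s (s i).1).card : ℝ)
  + ∑ e ∈ E, ∑ side : Bool,
      if i ∈ eWinners s e side then w e / ((eWinners s e side).card : ℝ) else 0

/-- the pure profile in which each player `j` plays its own vertex with side `t j` -/
def baseProf (t : V → Bool) : V → V × Bool := fun j => (j, t j)

/-- expected utility of player `i` under the uniform mixed profile where each player
independently plays its own vertex with a uniformly random side -/
def expUtil (E : Finset (Sym2 V)) (w : Sym2 V → ℝ) (i : V) : ℝ :=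
  (1 / 2) ^ (Fintype.card V) * ∑ t : V → Bool, mcUtil E w (baseProf t) i

/-- expected utility of player `i` when unilaterally deviating to the pure strategy `a`
while all other players follow the uniform mixed profile -/
def expDev (E : Finset (Sym2 V)) (w : Sym2 V → ℝ) (i : V) (a : V × Bool) : ℝ :=
  (1 / 2) ^ (Fintype.card V) *
    ∑ t : V → Bool, mcUtil E w (Function.update (baseProf t) i a) i

/-- Pairing `t` with its flip at `i` shows that freezing coordinate `i` to `true` and to `false`
together count every `t` twice; flip-invariance makes the two frozen sums equal. -/
theorem sum_comp_update_eq_sum_of_comp_not {ι M : Type*} [Fintype ι] [DecidableEq ι]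
    [AddCommGroup M] [IsAddTorsionFree M] (f : (ι → Bool) → M)
    (hf : ∀ t, f (not ∘ t) = f t) (i : ι) (b : Bool) :
    ∑ t, f (Function.update t i b) = ∑ t, f t := by
  have hnot : Function.Involutive fun t : ι → Bool => not ∘ t := fun t => by
    funext j; simp
  have hflip : ∀ b, ∑ t, f (Function.update t i b) = ∑ t, f (Function.update t i !b) := by
    intro b
    refine Fintype.sum_bijective _ hnot.bijective _ _ fun t => ?_
    rw [← hf, Function.comp_update]
  have hswap : Function.Involutive fun t : ι → Bool => Function.update t i !(t i) := by
    intro t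
    simp only [Function.update_self, Function.update_idem, Bool.not_not, Function.update_eq_self]
  have htotal : ∑ t, f (Function.update t i true) + ∑ t, f (Function.update t i false)
      = 2 • ∑ t, f t := by
    have hsplit : ∀ t : ι → Bool, f (Function.update t i true) + f (Function.update t i false)
        = f (Function.update t i (t i)) + f (Function.update t i !(t i)) := by
      intro t
      cases t i
      · exact add_comm _ _
      · rfl
    simp only [← sum_add_distrib, hsplit, Function.update_eq_self]
    rw [sum_add_distrib, two_nsmul,
      Fintype.sum_bijective _ hswap.bijective (fun t => f (Function.update t i !(t i))) f
        fun _ => rfl]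
  refine nsmul_right_injective two_ne_zero ?_
  dsimp only
  rw [← htotal, two_nsmul]
  cases b <;> simp only [hflip false, Bool.not_false]

theorem half_pow_card_mul_sum_const {ι : Type*} [Fintype ι] [DecidableEq ι] (c : ℝ) :
    (1 / 2 : ℝ) ^ Fintype.card ι * ∑ _t : ι → Bool, c = c := by
  rw [sum_const, card_univ, Fintype.card_fun, Fintype.card_bool, nsmul_eq_mul, Nat.cast_pow,
    ← mul_assoc, ← mul_pow]
  norm_num

theorem ite_mem_div_card_le {α : Type*} {x : ℝ} (hx : 0 ≤ x) (W : Finset α) (i : α)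
    [Decidable (i ∈ W)] : (if i ∈ W then x / (#W : ℝ) else 0) ≤ x := by
  split_ifs with hi
  · exact div_le_self hx (by exact_mod_cast card_pos.mpr ⟨i, hi⟩)
  · exact hx

def edgeUtil (E : Finset (Sym2 V)) (w : Sym2 V → ℝ) (s : V → V × Bool) (i : V) : ℝ :=
  ∑ e ∈ E, ∑ side : Bool,
    if i ∈ eWinners s e side then w e / ((eWinners s e side).card : ℝ) else 0

section UniformProfile

variable {E : Finset (Sym2 V)} {w : Sym2 V → ℝ}

theorem mcUtil_eq (s : V → V × Bool) (i : V) :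
    mcUtil E w s i = (4 * totalW E w + 2) / (#(vWinners s (s i).1) : ℝ) + edgeUtil E w s i :=
  rfl

theorem edgeUtil_nonneg (hw : ∀ e ∈ E, 0 ≤ w e) (s : V → V × Bool) (i : V) :
    0 ≤ edgeUtil E w s i :=
  sum_nonneg fun e he => sum_nonneg fun _ _ => by split_ifs <;> positivity [hw e he]

theorem edgeUtil_le_totalW (hw : ∀ e ∈ E, 0 ≤ w e) (s : V → V × Bool) (i : V) :
    edgeUtil E w s i ≤ totalW E w := by
  refine sum_le_sum fun e he => ?_
  have hother : ∀ side, side ≠ (s i).2 → i ∉ eWinners s e side := fun side hside hi =>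
    hside (mem_filter.1 hi).2.2.symm
  rw [Fintype.sum_eq_single (s i).2 fun side hside => if_neg (hother side hside)]
  exact ite_mem_div_card_le (hw e he) _ _

theorem vWinners_baseProf (t : V → Bool) (u : V) : vWinners (baseProf t) u = {u} := by
  ext j
  rw [vWinners, mem_filter]
  simp [baseProf]

theorem vWinners_update_baseProf (t : V → Bool) (i v : V) (b : Bool) :
    vWinners (Function.update (baseProf t) i (v, b)) v = {v, i} := by
  ext j
  rw [vWinners, mem_filter]
  rcases eq_or_ne j i with rfl | hj
  · simp
  · simp [baseProf, hj]

theorem le_mcUtil_baseProf (hw : ∀ e ∈ E, 0 ≤ w e) (t : V → Bool) (i : V) :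
    4 * totalW E w + 2 ≤ mcUtil E w (baseProf t) i := by
  rw [mcUtil_eq, show (baseProf t i).1 = i from rfl, vWinners_baseProf, card_singleton,
    Nat.cast_one, div_one]
  linarith [edgeUtil_nonneg hw (baseProf t) i]

theorem mcUtil_update_baseProf_le (hw : ∀ e ∈ E, 0 ≤ w e) (t : V → Bool) {i v : V} (b : Bool)
    (hv : v ≠ i) :
    mcUtil E w (Function.update (baseProf t) i (v, b)) i
      ≤ (4 * totalW E w + 2) / 2 + totalW E w := by
  rw [mcUtil_eq, Function.update_self, vWinners_update_baseProf, card_pair hv, Nat.cast_two]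
  linarith [edgeUtil_le_totalW hw (Function.update (baseProf t) i (v, b)) i]

theorem eWinners_baseProf_comp_not (t : V → Bool) (e : Sym2 V) (side : Bool) :
    eWinners (baseProf (not ∘ t)) e side = eWinners (baseProf t) e !side := by
  ext j
  rw [eWinners, eWinners, mem_filter, mem_filter]
  simp [baseProf, Bool.not_eq_eq_eq_not]

theorem mcUtil_baseProf_comp_not (t : V → Bool) (i : V) :
    mcUtil E w (baseProf (not ∘ t)) i = mcUtil E w (baseProf t) i := by
  simp only [mcUtil_eq, edgeUtil, eWinners_baseProf_comp_not]
  rw [show (baseProf (not ∘ t) i).1 = (baseProf t i).1 from rfl, vWinners_baseProf,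
    vWinners_baseProf]
  congr 1
  refine sum_congr rfl fun e _ => ?_
  rw [Fintype.sum_bool, Fintype.sum_bool, add_comm]
  rfl

theorem expDev_self (i : V) (b : Bool) :
    expDev E w i (i, b) = expUtil E w i := by
  have hupdate : ∀ t, Function.update (baseProf t) i (i, b) = baseProf (Function.update t i b) :=
    fun t => funext fun j => by rcases eq_or_ne j i with rfl | hj <;> simp [baseProf, *]
  simp only [expDev, expUtil, hupdate]
  rw [sum_comp_update_eq_sum_of_comp_not (fun t => mcUtil E w (baseProf t) i)
    (fun t => mcUtil_baseProf_comp_not t i)]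

theorem expDev_le (hw : ∀ e ∈ E, 0 ≤ w e) {i v : V}
    (b : Bool) (hv : v ≠ i) :
    expDev E w i (v, b) ≤ (4 * totalW E w + 2) / 2 + totalW E w := by
  rw [expDev, ← half_pow_card_mul_sum_const (ι := V) ((4 * totalW E w + 2) / 2 + totalW E w)]
  gcongr with t
  exact mcUtil_update_baseProf_le hw t b hv

theorem le_expUtil (hw : ∀ e ∈ E, 0 ≤ w e) (i : V) :
    4 * totalW E w + 2 ≤ expUtil E w i := by
  rw [expUtil, ← half_pow_card_mul_sum_const (ι := V) (4 * totalW E w + 2)]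
  gcongr with t
  exact le_mcUtil_baseProf hw t i

end UniformProfile

theorem uniform_mixed_profile_is_mne_general
    (E : Finset (Sym2 V)) (w : Sym2 V → ℝ)
    (hw : ∀ e ∈ E, 0 < w e) :
    (∀ i : V, ∀ side : Bool, expDev E w i (i, side) = expUtil E w i) ∧
    (∀ i : V, ∀ a : V × Bool, a.1 ≠ i → expDev E w i a < expUtil E w i) := by
  have hw' : ∀ e ∈ E, 0 ≤ w e := fun e he => (hw e he).le
  refine ⟨expDev_self, ?_⟩
  rintro i ⟨v, b⟩ (hv : v ≠ i)
  have hW : 0 ≤ totalW E w := sum_nonneg hw'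
  linarith [expDev_le hw' b hv, le_expUtil hw' i]

/-- The uniform-side mixed profile is a mixed Nash equilibrium of the max-cut reduction
game: any pure strategy on the player's own vertex gives the same expected utility, and
any pure strategy on a different vertex gives strictly lower expected utility. -/
theorem uniform_mixed_profile_is_mne
    (E : Finset (Sym2 V)) (w : Sym2 V → ℝ)
    (hE : ∀ e ∈ E, ¬ e.IsDiag) (hw : ∀ e ∈ E, 0 < w e) :
    (∀ i : V, ∀ side : Bool, expDev E w i (i, side) = expUtil E w i) ∧
    (∀ i : V, ∀ a : V × Bool, a.1 ≠ i → expDev E w i a < expUtil E w i) :=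
  uniform_mixed_profile_is_mne_general E w hw

end MaxCutMixed
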